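/- Let G be a simple 1-dof Henneberg-I graph with base non-edge f = (v1, v2), in which u1 and u2 are the only vertices constructed directly on the base pair (v1, v2), and v1 has degree 2. Then G \ {v1} is a simple 1-dof Henneberg-I graph with base non-edge (u1, u2). -/

import Mathlib

open SimpleGraph

variable {α : Type*} [DecidableEq α]

/-- Validity of a Henneberg-I construction sequence (list of steps `(v, u, w)` meaning
`v ◁ (u, w)`) starting from the vertex set `S`. -/
def ValidFrom (S : Finset α) : List (α × α × α) → Prop
  | [] => True
  | (v, u, w) :: rest => v ∉ S ∧ u ∈ S ∧ w ∈ S ∧ u ≠ w ∧ ValidFrom (insert v S) rest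

/-- The vertex set built by a Henneberg-I construction from base edge `(a, b)`. -/
def buildVerts (a b : α) (l : List (α × α × α)) : Finset α :=
  l.foldl (fun s p => insert p.1 s) {a, b}

/-- The edge set built by a Henneberg-I construction from base edge `(a, b)`. -/
def buildEdges (a b : α) (l : List (α × α × α)) : Finset (Sym2 α) :=
  l.foldl (fun s p => insert s(p.1, p.2.1) (insert s(p.1, p.2.2) s)) {s(a, b)}

/-- `(V, E)` is a Henneberg-I graph with base edge `(a, b)`. -/
def IsHennebergI (V : Finset α) (E : Finset (Sym2 α)) (a b : α) : Prop :=
  a ≠ b ∧ ∃ l, ValidFrom {a, b} l ∧ V = buildVerts a b l ∧ E = buildEdges a b l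

/-- `(V, E)` is a simple 1-dof Henneberg-I graph with base non-edge `(a, b)`:
adding back the base edge `(a, b)` gives a Henneberg-I graph with base edge `(a, b)`. -/
def IsSimple1Dof (V : Finset α) (E : Finset (Sym2 α)) (a b : α) : Prop :=
  s(a, b) ∉ E ∧ IsHennebergI V (insert s(a, b) E) a b

/-- `(V', E')` is a subgraph of `(V, E)`. -/
def IsSubgraphOf (V : Finset α) (E : Finset (Sym2 α)) (V' : Finset α)
    (E' : Finset (Sym2 α)) : Prop :=
  V' ⊆ V ∧ E' ⊆ E ∧ ∀ e ∈ E', ∀ v ∈ e, v ∈ V'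

/-- `(V, E)` is wellconstrained (Laman): `|E| = 2|V| - 3` and every subgraph on `m`
vertices has at most `2m - 3` edges. -/
def IsLaman (V : Finset α) (E : Finset (Sym2 α)) : Prop :=
  E.card + 3 = 2 * V.card ∧
  ∀ V' E', IsSubgraphOf V E V' E' → E'.card ≤ 2 * V'.card - 3

/-- The degree of the vertex `x` in the edge set `E`. -/
def degreeIn (E : Finset (Sym2 α)) (x : α) : ℕ := (E.filter (fun e => x ∈ e)).card

/-- A step `p = (v, u, w)` is constructed directly on the base pair `(a, b)`. -/
def OnBase (a b : α) (p : α × α × α) : Prop :=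
  (p.2.1 = a ∧ p.2.2 = b) ∨ (p.2.1 = b ∧ p.2.2 = a)

/-- The 1-path property: exactly one vertex other than `a` and `b` has degree 2. -/
def OnePath (V : Finset α) (E : Finset (Sym2 α)) (a b : α) : Prop :=
  ∃! x, x ∈ V ∧ x ≠ a ∧ x ≠ b ∧ degreeIn E x = 2

/-- Triangle-decomposability of a graph `(V, E)`. -/
inductive TriDecomp : Finset α → Finset (Sym2 α) → Prop
  | edge (u v : α) (h : u ≠ v) : TriDecomp {u, v} {s(u, v)}
  | triangle (u v w : α) (huv : u ≠ v) (hvw : v ≠ w) (huw : u ≠ w) :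
      TriDecomp {u, v, w} {s(u, v), s(v, w), s(u, w)}
  | merge (V1 V2 V3 : Finset α) (E1 E2 E3 : Finset (Sym2 α)) (v1 v2 v3 : α)
      (h12 : v1 ≠ v2) (h23 : v2 ≠ v3) (h13 : v1 ≠ v3)
      (t1 : TriDecomp V1 E1) (t2 : TriDecomp V2 E2) (t3 : TriDecomp V3 E3)
      (i12 : V1 ∩ V2 = {v3}) (i23 : V2 ∩ V3 = {v1}) (i13 : V1 ∩ V3 = {v2})
      (e12 : E1 ∩ E2 = ∅) (e23 : E2 ∩ E3 = ∅) (e13 : E1 ∩ E3 = ∅) :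
      TriDecomp (V1 ∪ V2 ∪ V3) (E1 ∪ E2 ∪ E3)

/-- `H` is a minor of `G`: branch-set definition. -/
def HasMinor {V W : Type*} (G : SimpleGraph V) (H : SimpleGraph W) : Prop :=
  ∃ f : W → Set V,
    (∀ w, (f w).Nonempty) ∧
    (∀ w, (G.induce (f w)).Connected) ∧
    (∀ w w', w ≠ w' → Disjoint (f w) (f w')) ∧
    ∀ w w', H.Adj w w' → ∃ x ∈ f w, ∃ y ∈ f w', G.Adj x y

/-! Since `v1` has degree 2 and is adjacent to both `u1` and `u2`, no step other than those of
`u1` and `u2` uses `v1` as a base vertex. Hence `G \ {v1}` is constructed from the base pair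
`(u1, u2)` by first building `v2` on `(u1, u2)`, whose two edges `v2u1`, `v2u2` are exactly what
is left of the steps of `u1` and `u2`, and then replaying all other steps unchanged. The pair
`u1u2` is not an edge of `G` because both its ends were built directly on `(v1, v2)`. -/

open Finset

lemma validFrom_cons_iff (S : Finset α) (p : α × α × α) (l : List (α × α × α)) :
    ValidFrom S (p :: l) ↔
      p.1 ∉ S ∧ p.2.1 ∈ S ∧ p.2.2 ∈ S ∧ p.2.1 ≠ p.2.2 ∧ ValidFrom (insert p.1 S) l :=
  Iff.rfl

lemma mem_foldl_insert_fst (l : List (α × α × α)) (S : Finset α) (x : α) :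
    x ∈ l.foldl (fun s p => insert p.1 s) S ↔ x ∈ S ∨ ∃ p ∈ l, p.1 = x := by
  induction l generalizing S with
  | nil => simp
  | cons p l ih => grind

lemma mem_buildVerts {a b x : α} {l : List (α × α × α)} :
    x ∈ buildVerts a b l ↔ x = a ∨ x = b ∨ ∃ p ∈ l, p.1 = x := by
  simp [buildVerts, mem_foldl_insert_fst, or_assoc]

lemma mem_foldl_insert_edges (l : List (α × α × α)) (T : Finset (Sym2 α)) (e : Sym2 α) :
    e ∈ l.foldl (fun s p => insert s(p.1, p.2.1) (insert s(p.1, p.2.2) s)) T ↔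
      e ∈ T ∨ ∃ p ∈ l, e = s(p.1, p.2.1) ∨ e = s(p.1, p.2.2) := by
  induction l generalizing T with
  | nil => simp
  | cons p l ih => grind

lemma mem_buildEdges {a b : α} {l : List (α × α × α)} {e : Sym2 α} :
    e ∈ buildEdges a b l ↔ e = s(a, b) ∨ ∃ p ∈ l, e = s(p.1, p.2.1) ∨ e = s(p.1, p.2.2) := by
  simp [buildEdges, mem_foldl_insert_edges]

namespace ValidFrom

variable {S : Finset α} {l : List (α × α × α)}

lemma fst_notMem (hl : ValidFrom S l) {p : α × α × α} (hp : p ∈ l) : p.1 ∉ S := by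
  induction l generalizing S with
  | nil => simp at hp
  | cons q l ih =>
    rw [validFrom_cons_iff] at hl
    rcases List.mem_cons.1 hp with rfl | hp
    · exact hl.1
    · exact fun h => ih hl.2.2.2.2 hp (mem_insert_of_mem h)

lemma nodup_map_fst (hl : ValidFrom S l) : (l.map Prod.fst).Nodup := by
  induction l generalizing S with
  | nil => simp
  | cons q l ih =>
    rw [validFrom_cons_iff] at hl
    refine List.nodup_cons.2 ⟨?_, ih hl.2.2.2.2⟩
    simp only [List.mem_map, not_exists, not_and]
    exact fun p hp hpq => hl.2.2.2.2.fst_notMem hp (hpq ▸ mem_insert_self _ _)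

lemma eq_of_fst_eq (hl : ValidFrom S l) {p q : α × α × α} (hp : p ∈ l) (hq : q ∈ l)
    (h : p.1 = q.1) : p = q :=
  List.inj_on_of_nodup_map hl.nodup_map_fst hp hq h

lemma filter_fst_notMem {D R : Finset α} (hl : ValidFrom S l) (hD : D ⊆ S)
    (hanch : ∀ p ∈ l, p.1 ∉ R → p.2.1 ∉ D ∧ p.2.2 ∉ D) :
    ValidFrom (R ∪ S \ D) (l.filter (fun p => p.1 ∉ R)) := by
  induction l generalizing S with
  | nil => trivial
  | cons p l ih =>
    rw [validFrom_cons_iff] at hl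
    obtain ⟨hpS, hu, hw, huw, hl⟩ := hl
    have ih := ih hl (hD.trans (subset_insert _ _)) fun q hq => hanch q (List.mem_cons_of_mem p hq)
    by_cases hpR : p.1 ∈ R
    · rw [List.filter_cons_of_neg (by simpa using hpR)]
      convert ih using 1
      grind
    · rw [List.filter_cons_of_pos (by simpa using hpR), validFrom_cons_iff]
      obtain ⟨huD, hwD⟩ := hanch p List.mem_cons_self hpR
      refine ⟨by grind, by grind, by grind, huw, ?_⟩
      convert ih using 1
      grind

end ValidFrom

lemma mk_mem_buildEdges (a b : α) {l : List (α × α × α)} {p : α × α × α} (hp : p ∈ l) {x : α}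
    (hx : x = p.2.1 ∨ x = p.2.2) : s(p.1, x) ∈ buildEdges a b l :=
  mem_buildEdges.2 <| .inr ⟨p, hp, by rcases hx with rfl | rfl <;> simp⟩

lemma OnBase.eq_mk_iff {β : Type*} {a b : β} {p : β × β × β} (hp : OnBase a b p) (e : Sym2 β) :
    e = s(p.1, p.2.1) ∨ e = s(p.1, p.2.2) ↔ e = s(p.1, a) ∨ e = s(p.1, b) := by
  rcases hp with ⟨h1, h2⟩ | ⟨h1, h2⟩ <;> rw [h1, h2]
  exact or_comm

lemma eq_or_eq_of_degreeIn_eq_two {E : Finset (Sym2 α)} {x a b c : α}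
    (hdeg : degreeIn E x = 2) (hab : a ≠ b) (ha : s(a, x) ∈ E) (hb : s(b, x) ∈ E)
    (hc : s(c, x) ∈ E) : c = a ∨ c = b := by
  by_contra! hne
  have hsub : ({s(a, x), s(b, x), s(c, x)} : Finset (Sym2 α)) ⊆ E.filter (x ∈ ·) := by
    simp [insert_subset_iff, ha, hb, hc]
  have hcard := card_le_card hsub
  rw [card_eq_three.2 ⟨_, _, _, Sym2.congr_left.not.2 hab, Sym2.congr_left.not.2 hne.1.symm,
    Sym2.congr_left.not.2 hne.2.symm, rfl⟩] at hcard
  unfold degreeIn at hdeg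
  omega

lemma ValidFrom.anchor_ne_of_degreeIn_eq_two {v1 v2 : α} {l : List (α × α × α)}
    (hl : ValidFrom {v1, v2} l) (hdeg : degreeIn ((buildEdges v1 v2 l).erase s(v1, v2)) v1 = 2)
    {q1 q2 : α × α × α} (hq1 : q1 ∈ l) (hq2 : q2 ∈ l) (hq1b : OnBase v1 v2 q1)
    (hq2b : OnBase v1 v2 q2) (hne : q1.1 ≠ q2.1) :
    ∀ p ∈ l, p.1 ∉ ({q1.1, q2.1} : Finset α) → p.2.1 ≠ v1 ∧ p.2.2 ≠ v1 := by
  have hedge : ∀ p ∈ l, v1 = p.2.1 ∨ v1 = p.2.2 →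
      s(p.1, v1) ∈ (buildEdges v1 v2 l).erase s(v1, v2) := fun p hp hv1 =>
    mem_erase.2 ⟨fun h => hl.fst_notMem hp (by simpa [h] using Sym2.mem_mk_left p.1 v1),
      mk_mem_buildEdges v1 v2 hp hv1⟩
  have hq1v1 : s(q1.1, v1) ∈ _ := hedge q1 hq1 (by rcases hq1b with ⟨h, -⟩ | ⟨-, h⟩ <;> simp [h])
  have hq2v1 : s(q2.1, v1) ∈ _ := hedge q2 hq2 (by rcases hq2b with ⟨h, -⟩ | ⟨-, h⟩ <;> simp [h])
  intro p hp hpq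
  have key : v1 = p.2.1 ∨ v1 = p.2.2 → False := fun hv1 =>
    hpq (by simpa using eq_or_eq_of_degreeIn_eq_two hdeg hne hq1v1 hq2v1 (hedge p hp hv1))
  grind

def rebaseSteps (u1 u2 v2 : α) (l : List (α × α × α)) : List (α × α × α) :=
  (v2, u1, u2) :: l.filter (fun p => p.1 ∉ ({u1, u2} : Finset α))

section rebaseSteps

variable {v1 v2 u1 u2 : α} {l : List (α × α × α)}

lemma mem_rebaseSteps {p : α × α × α} :
    p ∈ rebaseSteps u1 u2 v2 l ↔ p = (v2, u1, u2) ∨ p ∈ l ∧ p.1 ≠ u1 ∧ p.1 ≠ u2 := by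
  simp [rebaseSteps]

lemma validFrom_rebaseSteps (hl : ValidFrom {v1, v2} l) (hv : v1 ≠ v2) (hu : u1 ≠ u2)
    (hu1 : u1 ≠ v2) (hu2 : u2 ≠ v2)
    (hanch : ∀ p ∈ l, p.1 ∉ ({u1, u2} : Finset α) → p.2.1 ≠ v1 ∧ p.2.2 ≠ v1) :
    ValidFrom {u1, u2} (rebaseSteps u1 u2 v2 l) := by
  have hfilter := hl.filter_fst_notMem (D := {v1}) (R := {u1, u2}) (by simp)
    (by simpa using hanch)
  refine (validFrom_cons_iff _ _ _).2 ⟨by simp [hu1.symm, hu2.symm], by simp, by simp, hu, ?_⟩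
  convert hfilter using 1
  grind

lemma buildVerts_rebaseSteps (hv : v1 ≠ v2) (hfst : ∀ p ∈ l, p.1 ≠ v1)
    (hu1 : ∃ p ∈ l, p.1 = u1) (hu2 : ∃ p ∈ l, p.1 = u2) :
    buildVerts u1 u2 (rebaseSteps u1 u2 v2 l) = (buildVerts v1 v2 l).erase v1 := by
  ext x
  simp only [mem_buildVerts, mem_rebaseSteps, mem_erase]
  grind

lemma buildEdges_rebaseSteps (hv : v1 ≠ v2) (hfst : ∀ p ∈ l, p.1 ≠ v1)
    (hu1 : ∃ p ∈ l, p.1 = u1) (hu2 : ∃ p ∈ l, p.1 = u2)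
    (hbase : ∀ p ∈ l, p.1 ∈ ({u1, u2} : Finset α) → OnBase v1 v2 p)
    (hanch : ∀ p ∈ l, p.1 ∉ ({u1, u2} : Finset α) → p.2.1 ≠ v1 ∧ p.2.2 ≠ v1) :
    buildEdges u1 u2 (rebaseSteps u1 u2 v2 l) =
      insert s(u1, u2) ((buildEdges v1 v2 l).filter (v1 ∉ ·)) := by
  have hv2 : ∀ u ∈ ({u1, u2} : Finset α), s(v2, u) ∈ (buildEdges v1 v2 l).filter (v1 ∉ ·) := by
    intro u hu
    obtain ⟨p, hp, rfl⟩ : ∃ p ∈ l, p.1 = u := by simp only [mem_insert, mem_singleton] at hu; grind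
    refine mem_filter.2 ⟨mem_buildEdges.2 (.inr ⟨p, hp, ?_⟩), ?_⟩
    · exact ((hbase p hp hu).eq_mk_iff _).2 (.inr Sym2.eq_swap)
    · simp [hv, (hfst p hp).symm]
  ext e
  simp only [mem_buildEdges, mem_rebaseSteps, mem_insert, mem_filter]
  constructor
  · rintro (rfl | ⟨p, rfl | ⟨hp, hpu1, hpu2⟩, he⟩)
    · exact .inl rfl
    · rcases he with rfl | rfl
      · exact .inr (by simpa only [mem_filter, mem_buildEdges] using hv2 u1 (by simp))
      · exact .inr (by simpa only [mem_filter, mem_buildEdges] using hv2 u2 (by simp))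
    · obtain ⟨h1, h2⟩ := hanch p hp (by simp [hpu1, hpu2])
      refine .inr ⟨.inr ⟨p, hp, he⟩, ?_⟩
      rcases he with rfl | rfl <;> simp [(hfst p hp).symm, h1.symm, h2.symm]
  · rintro (rfl | ⟨rfl | ⟨p, hp, he⟩, hv1⟩)
    · exact .inl rfl
    · simp at hv1
    · by_cases hpu : p.1 ∈ ({u1, u2} : Finset α)
      · rw [(hbase p hp hpu).eq_mk_iff] at he
        rcases he with rfl | rfl
        · simp at hv1
        · simp only [mem_insert, mem_singleton] at hpu
          refine .inr ⟨(v2, u1, u2), .inl rfl, ?_⟩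
          rcases hpu with h | h <;> rw [h, Sym2.eq_swap] <;> simp
      · simp only [mem_insert, mem_singleton, not_or] at hpu
        exact .inr ⟨p, .inr ⟨hp, hpu⟩, he⟩

lemma mk_notMem_buildEdges (hu1 : u1 ∉ ({v1, v2} : Finset α)) (hu2 : u2 ∉ ({v1, v2} : Finset α))
    (hbase : ∀ p ∈ l, p.1 ∈ ({u1, u2} : Finset α) → OnBase v1 v2 p) :
    s(u1, u2) ∉ buildEdges v1 v2 l := by
  simp only [mem_insert, mem_singleton, not_or] at hu1 hu2
  rw [mem_buildEdges]
  rintro (h | ⟨p, hp, h⟩)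
  · grind
  · have hp1 : p.1 ∈ ({u1, u2} : Finset α) := by
      have : p.1 ∈ s(u1, u2) := by rcases h with h | h <;> simp [h]
      simpa using this
    rw [(hbase p hp hp1).eq_mk_iff] at h
    grind

end rebaseSteps

theorem stmt12_general (v1 v2 : α) (hab : v1 ≠ v2) (l : List (α × α × α))
    (hl : ValidFrom {v1, v2} l)
    (V : Finset α) (E : Finset (Sym2 α))
    (hV : V = buildVerts v1 v2 l) (hE : E = (buildEdges v1 v2 l).erase s(v1, v2))
    (u1 u2 : α) (hu : u1 ≠ u2)
    (hu1 : ∃ p ∈ l, p.1 = u1 ∧ OnBase v1 v2 p)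
    (hu2 : ∃ p ∈ l, p.1 = u2 ∧ OnBase v1 v2 p)
    (hdeg : degreeIn E v1 = 2) :
    IsSimple1Dof (V.erase v1) (E.filter (fun e => v1 ∉ e)) u1 u2 := by
  subst hV hE
  obtain ⟨q1, hq1, rfl, hq1b⟩ := hu1
  obtain ⟨q2, hq2, rfl, hq2b⟩ := hu2
  have hfst : ∀ p ∈ l, p.1 ≠ v1 := fun p hp h => hl.fst_notMem hp (by simp [h])
  have hbase : ∀ p ∈ l, p.1 ∈ ({q1.1, q2.1} : Finset α) → OnBase v1 v2 p := by
    intro p hp hpq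
    rcases mem_insert.1 hpq with h | h
    · rwa [hl.eq_of_fst_eq hp hq1 h]
    · rwa [hl.eq_of_fst_eq hp hq2 (mem_singleton.1 h)]
  have hanch := hl.anchor_ne_of_degreeIn_eq_two hdeg hq1 hq2 hq1b hq2b hu
  have hfilter : ((buildEdges v1 v2 l).erase s(v1, v2)).filter (v1 ∉ ·) =
      (buildEdges v1 v2 l).filter (v1 ∉ ·) := by
    rw [filter_erase, erase_eq_of_notMem (by simp)]
  have hq1v2 : q1.1 ≠ v2 := fun h => hl.fst_notMem hq1 (by simp [h])
  have hq2v2 : q2.1 ≠ v2 := fun h => hl.fst_notMem hq2 (by simp [h])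
  refine ⟨?_, hu, rebaseSteps q1.1 q2.1 v2 l,
    validFrom_rebaseSteps hl hab hu hq1v2 hq2v2 hanch,
    (buildVerts_rebaseSteps hab hfst ⟨q1, hq1, rfl⟩ ⟨q2, hq2, rfl⟩).symm, ?_⟩
  · rw [hfilter]
    exact fun h => mk_notMem_buildEdges (hl.fst_notMem hq1) (hl.fst_notMem hq2) hbase
      (mem_filter.1 h).1
  · rw [hfilter, buildEdges_rebaseSteps hab hfst ⟨q1, hq1, rfl⟩ ⟨q2, hq2, rfl⟩ hbase hanch]

/-- If `u1` and `u2` are the only vertices constructed directly on the base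
pair `(v1, v2)` and `v1` has degree 2, then `G \ {v1}` is a simple 1-dof Henneberg-I graph
with base non-edge `(u1, u2)`. -/
theorem stmt12 (v1 v2 : α) (hab : v1 ≠ v2) (l : List (α × α × α))
    (hl : ValidFrom {v1, v2} l)
    (V : Finset α) (E : Finset (Sym2 α))
    (hV : V = buildVerts v1 v2 l) (hE : E = (buildEdges v1 v2 l).erase s(v1, v2))
    (u1 u2 : α) (hu : u1 ≠ u2)
    (hu1 : ∃ p ∈ l, p.1 = u1 ∧ OnBase v1 v2 p)
    (hu2 : ∃ p ∈ l, p.1 = u2 ∧ OnBase v1 v2 p)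
    (honly : ∀ p ∈ l, OnBase v1 v2 p → p.1 = u1 ∨ p.1 = u2)
    (hdeg : degreeIn E v1 = 2) :
    IsSimple1Dof (V.erase v1) (E.filter (fun e => v1 ∉ e)) u1 u2 :=
  stmt12_general v1 v2 hab l hl V E hV hE u1 u2 hu hu1 hu2 hdeg
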